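/- Let Ā_k ∈ ℝ^{n×n} be a 𝒯-periodic sequence whose monodromy matrix Φ̄_k = Ā_{k+𝒯−1}···Ā_k is Schur stable for every k, and let Q̄_k be a 𝒯-periodic sequence of symmetric positive semidefinite matrices. Then there exists a unique 𝒯-periodic sequence of symmetric matrices P̄_· satisfying the discrete-time periodic Lyapunov equation P̄_{k+1} = Ā_k P̄_k Ā_kᵀ + Q̄_k for all k, and every P̄_k is positive semidefinite. -/

import Mathlib

/-!
Over one period the recursion `P ↦ A P Aᵀ + Q` composes to an affine map `X ↦ Φ X Φᵀ + C`,
where `Φ` is the monodromy matrix. Since `Φ` is Schur stable, `Φ ^ m → 0`, so the homogeneous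
Stein equation `X = Φ X Φᵀ` has only the trivial solution. By finite dimensionality the
inhomogeneous one `X = Φ X Φᵀ + C` then has a solution, which starts a periodic solution, and
any two periodic solutions differ by a solution of the homogeneous equation. For `C ⪰ 0` that
solution is the limit of the partial sums `∑_{i<m} Φ^i C (Φ^i)ᵀ`, hence positive semidefinite.
-/

open Matrix

/-- A real square matrix is Schur stable if every complex eigenvalue has modulus `< 1`. -/
def SchurStable {n : ℕ} (A : Matrix (Fin n) (Fin n) ℝ) : Prop :=
  ∀ μ ∈ spectrum ℂ (A.map (algebraMap ℝ ℂ)), ‖μ‖ < 1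

/-- `phiProd F k h = F (k+h-1) * ⋯ * F (k+1) * F k`. -/
def phiProd {n : ℕ} (F : ℕ → Matrix (Fin n) (Fin n) ℝ) (k : ℕ) :
    ℕ → Matrix (Fin n) (Fin n) ℝ
  | 0 => 1
  | h + 1 => F (k + h) * phiProd F k h

open Filter Topology

theorem tendsto_pow_atTop_nhds_zero_of_spectralRadius_lt_one {A : Type*} [NormedRing A]
    [NormedAlgebra ℂ A] [CompleteSpace A] {a : A} (ha : spectralRadius ℂ a < 1) :
    Tendsto (a ^ ·) atTop (𝓝 0) := by
  obtain ⟨r, hr, hr1⟩ := ENNReal.lt_iff_exists_nnreal_btwn.mp ha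
  have hbound : ∀ᶠ m : ℕ in atTop, ‖a ^ m‖ ≤ (r : ℝ) ^ m := by
    filter_upwards [(spectrum.pow_nnnorm_pow_one_div_tendsto_nhds_spectralRadius a
      ).eventually_lt_const hr, eventually_ne_atTop 0] with m hm hm0
    have := ENNReal.rpow_le_rpow hm.le (z := m) (by positivity)
    rw [← ENNReal.rpow_mul, one_div, inv_mul_cancel₀ (by positivity), ENNReal.rpow_one,
      ENNReal.rpow_natCast, ← ENNReal.coe_pow, ENNReal.coe_le_coe] at this
    exact_mod_cast this
  refine squeeze_zero_norm' hbound (tendsto_pow_atTop_nhds_zero_of_lt_one r.coe_nonneg ?_)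
  exact_mod_cast hr1

theorem Matrix.isClosed_setOf_posSemidef {ι R : Type*} [Fintype ι] [CommRing R] [PartialOrder R]
    [StarRing R] [TopologicalSpace R] [IsTopologicalRing R] [ContinuousStar R]
    [OrderClosedTopology R] :
    IsClosed {M : Matrix ι ι R | M.PosSemidef} := by
  simp only [posSemidef_iff_dotProduct_mulVec, Set.ofPred_and, Set.ofPred_forall]
  refine (isClosed_eq continuous_id.matrix_conjTranspose continuous_id).inter
    (isClosed_iInter fun x => isClosed_le continuous_const ?_)
  exact continuous_const.dotProduct (continuous_id.matrix_mulVec continuous_const)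

theorem phiProd_const {n : ℕ} (Φ : Matrix (Fin n) (Fin n) ℝ) (k h : ℕ) :
    phiProd (fun _ => Φ) k h = Φ ^ h := by
  induction h with
  | zero => rfl
  | succ h ih => rw [phiProd, ih, pow_succ']

namespace SchurStable

variable {n : ℕ} {Φ : Matrix (Fin n) (Fin n) ℝ}

theorem tendsto_pow (hΦ : SchurStable Φ) : Tendsto (Φ ^ ·) atTop (𝓝 0) := by
  -- The topology of the `L∞`-operator norm is, by definition, the product topology.
  let := @Matrix.linftyOpNormedRing (Fin n) ℂ _ _ _
  let := @Matrix.linftyOpNormedAlgebra ℂ (Fin n) ℂ _ _ _ _ _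
  have : CompleteSpace (Matrix (Fin n) (Fin n) ℂ) := FiniteDimensional.complete ℂ _
  have hrad : spectralRadius ℂ (Φ.map (algebraMap ℝ ℂ)) < 1 := by
    rcases (spectrum ℂ (Φ.map (algebraMap ℝ ℂ))).eq_empty_or_nonempty with he | hne
    · rw [spectralRadius, he]
      simp
    · simpa using spectrum.spectralRadius_lt_of_forall_lt_of_nonempty hne
        (r := 1) fun z hz => by exact_mod_cast hΦ z hz
  have hre : ∀ m : ℕ, Φ ^ m = (Φ.map (algebraMap ℝ ℂ) ^ m).map Complex.re := fun m => by
    rw [← (algebraMap ℝ ℂ).mapMatrix_apply, ← map_pow, RingHom.mapMatrix_apply,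
      Matrix.map_map]
    ext; simp
  convert ((continuous_id.matrix_map Complex.continuous_re).tendsto 0).comp
    (tendsto_pow_atTop_nhds_zero_of_spectralRadius_lt_one hrad) using 1
  · exact funext hre
  · simp

theorem tendsto_pow_mul_mul_transpose_pow (hΦ : SchurStable Φ) (X : Matrix (Fin n) (Fin n) ℝ) :
    Tendsto (fun m : ℕ => Φ ^ m * X * (Φ ^ m)ᵀ) atTop (𝓝 0) := by
  simpa using (hΦ.tendsto_pow.mul_const X).mul
    ((continuous_id.matrix_transpose.tendsto 0).comp hΦ.tendsto_pow)

theorem eq_zero_of_eq_mul_mul_transpose (hΦ : SchurStable Φ) {X : Matrix (Fin n) (Fin n) ℝ}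
    (hX : X = Φ * X * Φᵀ) : X = 0 := by
  have hpow : ∀ m : ℕ, Φ ^ m * X * (Φ ^ m)ᵀ = X := by
    intro m
    induction m with
    | zero => simp
    | succ m ih =>
      calc Φ ^ (m + 1) * X * (Φ ^ (m + 1))ᵀ = Φ * (Φ ^ m * X * (Φ ^ m)ᵀ) * Φᵀ := by
            simp only [pow_succ', transpose_mul, Matrix.mul_assoc]
        _ = X := by rw [ih, ← hX]
  exact tendsto_nhds_unique (by simpa only [hpow] using tendsto_const_nhds)
    (hΦ.tendsto_pow_mul_mul_transpose_pow X)

theorem exists_eq_mul_mul_transpose_add (hΦ : SchurStable Φ) (S : Matrix (Fin n) (Fin n) ℝ) :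
    ∃ X : Matrix (Fin n) (Fin n) ℝ, X = Φ * X * Φᵀ + S := by
  let L : Matrix (Fin n) (Fin n) ℝ →ₗ[ℝ] Matrix (Fin n) (Fin n) ℝ :=
    LinearMap.id - LinearMap.mulLeft ℝ Φ ∘ₗ LinearMap.mulRight ℝ Φᵀ
  have hL : ∀ X, L X = X - Φ * X * Φᵀ := fun X => by simp [L, Matrix.mul_assoc]
  have hinj : Function.Injective L := by
    refine (injective_iff_map_eq_zero L).2 fun X hX => hΦ.eq_zero_of_eq_mul_mul_transpose ?_
    rwa [hL, sub_eq_zero] at hX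
  obtain ⟨X, hX⟩ := LinearMap.injective_iff_surjective.1 hinj S
  exact ⟨X, by rw [← hX, hL]; abel⟩

end SchurStable

section LyapunovRecursion

variable {n : ℕ}

def lyapSeq (A Q : ℕ → Matrix (Fin n) (Fin n) ℝ) (X : Matrix (Fin n) (Fin n) ℝ) :
    ℕ → Matrix (Fin n) (Fin n) ℝ
  | 0 => X
  | k + 1 => A k * lyapSeq A Q X k * (A k)ᵀ + Q k

@[simp]
theorem lyapSeq_zero (A Q : ℕ → Matrix (Fin n) (Fin n) ℝ) (X : Matrix (Fin n) (Fin n) ℝ) :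
    lyapSeq A Q X 0 = X := rfl

theorem lyapSeq_succ (A Q : ℕ → Matrix (Fin n) (Fin n) ℝ) (X : Matrix (Fin n) (Fin n) ℝ)
    (k : ℕ) : lyapSeq A Q X (k + 1) = A k * lyapSeq A Q X k * (A k)ᵀ + Q k := rfl

variable {A Q : ℕ → Matrix (Fin n) (Fin n) ℝ}

theorem lyapSeq_posSemidef (hQ : ∀ k, (Q k).PosSemidef) {X : Matrix (Fin n) (Fin n) ℝ}
    (hX : X.PosSemidef) (k : ℕ) : (lyapSeq A Q X k).PosSemidef := by
  induction k with
  | zero => exact hX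
  | succ k ih =>
    rw [lyapSeq_succ]
    simpa only [conjTranspose_eq_transpose_of_trivial] using
      (ih.mul_mul_conjTranspose_same (A k)).add (hQ k)

theorem lyapSeq_add_period {T : ℕ} (hA : ∀ k, A (k + T) = A k) (hQ : ∀ k, Q (k + T) = Q k)
    {X : Matrix (Fin n) (Fin n) ℝ} (hX : lyapSeq A Q X T = X) (k : ℕ) :
    lyapSeq A Q X (k + T) = lyapSeq A Q X k := by
  induction k with
  | zero => rw [zero_add, hX, lyapSeq_zero]
  | succ k ih => rw [add_right_comm, lyapSeq_succ, lyapSeq_succ, ih, hA, hQ]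

theorem sub_eq_phiProd_mul_mul_transpose {Y P : ℕ → Matrix (Fin n) (Fin n) ℝ}
    (hY : ∀ k, Y (k + 1) = A k * Y k * (A k)ᵀ + Q k)
    (hP : ∀ k, P (k + 1) = A k * P k * (A k)ᵀ + Q k) (k h : ℕ) :
    Y (k + h) - P (k + h) = phiProd A k h * (Y k - P k) * (phiProd A k h)ᵀ := by
  induction h with
  | zero => simp [phiProd]
  | succ h ih =>
    rw [← add_assoc, hY, hP, phiProd, transpose_mul, add_sub_add_right_eq_sub, ← Matrix.sub_mul,
      ← Matrix.mul_sub, ih]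
    simp only [Matrix.mul_assoc]

theorem eq_of_periodic_of_lyapunov {T : ℕ} (hstab : ∀ k, SchurStable (phiProd A k T))
    {Y P : ℕ → Matrix (Fin n) (Fin n) ℝ}
    (hYper : ∀ k, Y (k + T) = Y k) (hPper : ∀ k, P (k + T) = P k)
    (hY : ∀ k, Y (k + 1) = A k * Y k * (A k)ᵀ + Q k)
    (hP : ∀ k, P (k + 1) = A k * P k * (A k)ᵀ + Q k) : Y = P := by
  funext k
  have hfix := sub_eq_phiProd_mul_mul_transpose hY hP k T
  rw [hYper, hPper] at hfix
  exact sub_eq_zero.1 ((hstab k).eq_zero_of_eq_mul_mul_transpose hfix)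

end LyapunovRecursion

theorem SchurStable.posSemidef_of_eq_mul_mul_transpose_add {n : ℕ}
    {Φ X S : Matrix (Fin n) (Fin n) ℝ} (hΦ : SchurStable Φ) (hS : S.PosSemidef)
    (hX : X = Φ * X * Φᵀ + S) : X.PosSemidef := by
  -- the partial sums `P m = ∑_{i<m} Φ^i S (Φ^i)ᵀ`
  set P := lyapSeq (fun _ => Φ) (fun _ => S) 0
  have hdiff : P = fun m => X - Φ ^ m * X * (Φ ^ m)ᵀ := funext fun m => by
    have := sub_eq_phiProd_mul_mul_transpose (Y := fun _ => X) (fun _ => hX)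
      (lyapSeq_succ _ _ 0) 0 m
    rw [zero_add, lyapSeq_zero, sub_zero, phiProd_const] at this
    rw [← this, sub_sub_cancel]
  have hlim : Tendsto P atTop (𝓝 X) := by
    have := (tendsto_const_nhds (x := X)).sub (hΦ.tendsto_pow_mul_mul_transpose_pow X)
    rwa [sub_zero, ← hdiff] at this
  exact isClosed_setOf_posSemidef.mem_of_tendsto hlim
    (Eventually.of_forall (lyapSeq_posSemidef (fun _ => hS) .zero))

theorem statement6_general {n T : ℕ}
    (Abar Qbar : ℕ → Matrix (Fin n) (Fin n) ℝ)
    (hAbarPer : ∀ k, Abar (k + T) = Abar k)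
    (hQbarPer : ∀ k, Qbar (k + T) = Qbar k)
    (hQbarPSD : ∀ k, (Qbar k).PosSemidef)
    (hstab : ∀ k, SchurStable (phiProd Abar k T)) :
    ∃ P : ℕ → Matrix (Fin n) (Fin n) ℝ,
      ((∀ k, P (k + T) = P k) ∧ (∀ k, (P k).IsSymm) ∧
        (∀ k, P (k + 1) = Abar k * P k * (Abar k)ᵀ + Qbar k) ∧
        (∀ k, (P k).PosSemidef)) ∧
      ∀ Y : ℕ → Matrix (Fin n) (Fin n) ℝ,
        (∀ k, Y (k + T) = Y k) → (∀ k, (Y k).IsSymm) →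
        (∀ k, Y (k + 1) = Abar k * Y k * (Abar k)ᵀ + Qbar k) → Y = P := by
  obtain ⟨X, hX⟩ := (hstab 0).exists_eq_mul_mul_transpose_add (lyapSeq Abar Qbar 0 T)
  have hXT : lyapSeq Abar Qbar X T = X := by
    have h := sub_eq_phiProd_mul_mul_transpose (lyapSeq_succ Abar Qbar X)
      (lyapSeq_succ Abar Qbar 0) 0 T
    rw [zero_add, lyapSeq_zero, lyapSeq_zero, sub_zero, sub_eq_iff_eq_add] at h
    rw [h, ← hX]
  have hXpsd : X.PosSemidef := (hstab 0).posSemidef_of_eq_mul_mul_transpose_add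
    (lyapSeq_posSemidef hQbarPSD .zero T) hX
  have hPer := lyapSeq_add_period hAbarPer hQbarPer hXT
  have hPpsd : ∀ k, (lyapSeq Abar Qbar X k).PosSemidef := lyapSeq_posSemidef hQbarPSD hXpsd
  refine ⟨lyapSeq Abar Qbar X, ⟨hPer, fun k => isHermitian_iff_isSymm.1 (hPpsd k).isHermitian,
    lyapSeq_succ Abar Qbar X, hPpsd⟩, ?_⟩
  intro Y hYper _ hY
  exact eq_of_periodic_of_lyapunov hstab hYper hPer hY (lyapSeq_succ Abar Qbar X)

/-- if the 𝒯-periodic sequence `Ā_·` has Schur stable monodromy matrices and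
`Q̄_·` is 𝒯-periodic symmetric positive semidefinite, then the discrete-time periodic Lyapunov
equation `P̄_{k+1} = Ā_k P̄_k Ā_kᵀ + Q̄_k` has a unique 𝒯-periodic symmetric solution, and
this solution is positive semidefinite. -/
theorem statement6 {n T : ℕ} (hT : 1 ≤ T)
    (Abar Qbar : ℕ → Matrix (Fin n) (Fin n) ℝ)
    (hAbarPer : ∀ k, Abar (k + T) = Abar k)
    (hQbarPer : ∀ k, Qbar (k + T) = Qbar k)
    (hQbarPSD : ∀ k, (Qbar k).PosSemidef)
    (hstab : ∀ k, SchurStable (phiProd Abar k T)) :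
    ∃ P : ℕ → Matrix (Fin n) (Fin n) ℝ,
      ((∀ k, P (k + T) = P k) ∧ (∀ k, (P k).IsSymm) ∧
        (∀ k, P (k + 1) = Abar k * P k * (Abar k)ᵀ + Qbar k) ∧
        (∀ k, (P k).PosSemidef)) ∧
      ∀ Y : ℕ → Matrix (Fin n) (Fin n) ℝ,
        (∀ k, Y (k + T) = Y k) → (∀ k, (Y k).IsSymm) →
        (∀ k, Y (k + 1) = Abar k * Y k * (Abar k)ᵀ + Qbar k) → Y = P :=
  statement6_general Abar Qbar hAbarPer hQbarPer hQbarPSD hstab
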